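/- For 0 < λ < 1/2, the probability measure π_λ(dx) = M_λ e^{-x} sinh(√(1-2λ) x) dx on (0,∞) fails condition (iii): limsup_{x→∞} (1/x) ln π_λ([x,∞)) = −(1 − √(1-2λ)) > −1. In particular ∫ e^{ux} π_λ(dx) = ∞ for u ∈ (1 − √(1−2λ), 1). -/

import Mathlib

/-!
Writing `e^{-t} sinh(βt) = (e^{(β-1)t} - e^{-(1+β)t}) / 2`, the tail `π_λ([x,∞))` is
`e^{-(1-β)x}` times a factor tending to the nonzero constant `M / (2(1-β))`, so
`(1/x) ln π_λ([x,∞))` even converges to `-(1-β)`. For `u > 1-β` the same decomposition shows that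
`e^{ux} π_λ(dx)` differs from a multiple of `e^{(u-(1-β))x} dx` by an integrable density, and the
former is not integrable on a half-line.
-/

open MeasureTheory Real Filter Topology Set

theorem exp_neg_mul_sinh (β t : ℝ) :
    exp (-t) * sinh (β * t) = (exp ((β - 1) * t) - exp ((-1 - β) * t)) / 2 := by
  rw [show (β - 1) * t = -t + β * t by ring, show (-1 - β) * t = -t + -(β * t) by ring,
    exp_add, exp_add, sinh_eq]
  ring

theorem integral_Ici_exp_neg_mul_sinh {β : ℝ} (hβ : |β| < 1) (x : ℝ) :
    ∫ t in Ici x, exp (-t) * sinh (β * t)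
      = exp ((β - 1) * x) * ((1 - β)⁻¹ - (1 + β)⁻¹ * exp (-(2 * β) * x)) / 2 := by
  obtain ⟨hβ₁, hβ₂⟩ := abs_lt.mp hβ
  have hsub : β - 1 < 0 := by linarith
  have hadd : -1 - β < 0 := by linarith
  simp_rw [integral_Ici_eq_integral_Ioi, exp_neg_mul_sinh]
  rw [integral_div, integral_sub (integrableOn_exp_mul_Ioi hsub x)
    (integrableOn_exp_mul_Ioi hadd x), integral_exp_mul_Ioi hsub, integral_exp_mul_Ioi hadd]
  have hexp : exp ((-1 - β) * x) = exp ((β - 1) * x) * exp (-(2 * β) * x) := by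
    rw [← exp_add]; ring_nf
  rw [hexp]
  field_simp [hsub.ne, hadd.ne, show 1 - β ≠ 0 by linarith, show 1 + β ≠ 0 by linarith]
  ring

theorem tendsto_log_exp_mul_mul_div_atTop {c L : ℝ} {g : ℝ → ℝ} (hL : L ≠ 0)
    (hg : Tendsto g atTop (𝓝 L)) :
    Tendsto (fun x => log (exp (c * x) * g x) / x) atTop (𝓝 c) := by
  have hlog : Tendsto (fun x => log (g x) / x) atTop (𝓝 0) :=
    ((continuousAt_log hL).tendsto.comp hg).div_atTop tendsto_id
  refine (by simpa using hlog.const_add c : Tendsto _ atTop (𝓝 c)).congr' ?_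
  filter_upwards [hg.eventually_ne hL, eventually_gt_atTop 0] with x hgx hx
  rw [log_mul (exp_ne_zero _) hgx, log_exp, add_div, mul_div_cancel_right₀ _ hx.ne']

theorem not_integrableOn_Ioi_exp_mul {a : ℝ} (ha : 0 ≤ a) (c : ℝ) :
    ¬ IntegrableOn (fun x => exp (a * x)) (Ioi c) := by
  intro h
  have hconst : IntegrableOn (fun _ => exp (a * c)) (Ioi c) := by
    refine Integrable.mono' h aestronglyMeasurable_const ?_
    filter_upwards [ae_restrict_mem measurableSet_Ioi] with x hx
    rw [norm_of_nonneg (exp_pos _).le]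
    exact exp_le_exp.mpr (mul_le_mul_of_nonneg_left (le_of_lt hx) ha)
  simp [integrableOn_const_iff, (exp_pos _).ne'] at hconst

theorem not_integrableOn_Ioi_exp_mul_mul_exp_neg_mul_sinh {u β M : ℝ} (hM : M ≠ 0)
    (hlo : 1 - β < u) (hhi : u < 1 + β) (c : ℝ) :
    ¬ IntegrableOn (fun x => exp (u * x) * (M * (exp (-x) * sinh (β * x)))) (Ioi c) := by
  intro h
  have hsum :=
    (h.const_mul (2 / M)).add (integrableOn_exp_mul_Ioi (by linarith : u - 1 - β < 0) c)
  refine not_integrableOn_Ioi_exp_mul (by linarith : 0 ≤ u + β - 1) c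
    (IntegrableOn.congr_fun hsum (fun x _ => ?_) measurableSet_Ioi)
  simp only [Pi.add_apply, exp_neg_mul_sinh]
  rw [show (u + β - 1) * x = u * x + (β - 1) * x by ring,
    show (u - 1 - β) * x = u * x + (-1 - β) * x by ring, exp_add, exp_add]
  field_simp
  ring

/-- For `0 < λ < 1/2` and `β = √(1-2λ) ∈ (0,1)`, the QSD
`π_λ(dx) = M_λ e^{-x} sinh(βx) dx` (with `M_λ = (1-β²)/β` the normalising constant)
has tail decay rate `limsup (1/x) ln π_λ([x,∞)) = -(1-β) > -1`, and
`∫ e^{ux} dπ_λ = ∞` for every `u ∈ (1-β, 1)`. -/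
theorem stmt_2 (lam β M : ℝ) (h0 : 0 < lam) (h1 : lam < 1/2)
    (hβ : β = Real.sqrt (1 - 2 * lam)) (hM : M = (1 - β ^ 2) / β) :
    Filter.limsup
      (fun x => Real.log (∫ t in Set.Ici x, M * (Real.exp (-t) * Real.sinh (β * t))) / x)
      Filter.atTop = -(1 - β) ∧
    -(1 - β) > -1 ∧
    ∀ u : ℝ, 1 - β < u → u < 1 →
      ¬ IntegrableOn (fun x => Real.exp (u * x) * (M * (Real.exp (-x) * Real.sinh (β * x))))
        (Set.Ioi 0) := by
  have hβ₀ : 0 < β := hβ ▸ sqrt_pos.mpr (by linarith)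
  have hβ₁ : β < 1 := hβ ▸ (sqrt_lt' one_pos).mpr (by linarith)
  have hM₀ : M ≠ 0 := hM ▸ (div_pos (by nlinarith) hβ₀).ne'
  have hdecay : Tendsto (fun x => M * ((1 - β)⁻¹ - (1 + β)⁻¹ * exp (-(2 * β) * x)) / 2) atTop
      (𝓝 (M * ((1 - β)⁻¹ - (1 + β)⁻¹ * 0) / 2)) :=
    (((tendsto_exp_atBot.comp (tendsto_id.const_mul_atTop_of_neg (by linarith))).const_mul _
      |>.const_sub _).const_mul M).div_const 2
  have hrate := tendsto_log_exp_mul_mul_div_atTop (c := β - 1)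
    (by simp [hM₀, (by linarith : 1 - β ≠ 0)]) hdecay
  refine ⟨?_, by linarith, fun u hlo hhi =>
    not_integrableOn_Ioi_exp_mul_mul_exp_neg_mul_sinh hM₀ hlo (by linarith) 0⟩
  rw [neg_sub, ← hrate.limsup_eq]
  congr with x
  rw [integral_const_mul, integral_Ici_exp_neg_mul_sinh (abs_lt.mpr ⟨by linarith, hβ₁⟩)]
  congr 2
  ring
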